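/- arXiv:2409.13883 — 5 statements merged into one kernel-verified Lean document; each statement's English description precedes it below -/
import Mathlib

section
/- For all i, j ∈ I: 4 · |{w ∈ W : ℓ(s_i w s_j) = ℓ(w) − 2}| + |{w ∈ W : s_i w = w s_j}| = |W|. (This is the counting identity, obtained by analyzing the Klein four-group action w ↦ s_i w, w ↦ w s_j on W, that underlies the computation of the cardinality of Γ(W) = {(w, i, j) : ℓ(s_i w s_j) = ℓ(w) − 2}.) -/
open CoxeterSystem

namespace NilpotencyIndices

variable {B : Type*} {W : Type*} [Group W] {M : CoxeterMatrix B}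

/-- The set `Γ(W)` of triples `(w, i, j)` with `ℓ(sᵢ w sⱼ) = ℓ(w) - 2`
(stated as `ℓ(sᵢ w sⱼ) + 2 = ℓ(w)` to avoid truncated subtraction). -/
def InGamma (cs : CoxeterSystem M W) (x : W × B × B) : Prop :=
  cs.length (cs.simple x.2.1 * x.1 * cs.simple x.2.2) + 2 = cs.length x.1

/-- The weak left (Bruhat) order: `v ≤_L w` iff `ℓ(v) + ℓ(w v⁻¹) = ℓ(w)`. -/
def WeakLeftLE (cs : CoxeterSystem M W) (v w : W) : Prop :=
  cs.length v + cs.length (w * v⁻¹) = cs.length w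

/-- The weak right (Bruhat) order: `v ≤_R w` iff `ℓ(v) + ℓ(v⁻¹ w) = ℓ(w)`. -/
def WeakRightLE (cs : CoxeterSystem M W) (v w : W) : Prop :=
  cs.length v + cs.length (v⁻¹ * w) = cs.length w

/-- `v(α_a) = α_b`: the group-theoretic condition `v sₐ v⁻¹ = s_b` and `ℓ(v sₐ) = ℓ(v) + 1`. -/
def MapsSimple (cs : CoxeterSystem M W) (v : W) (a b : B) : Prop :=
  v * cs.simple a * v⁻¹ = cs.simple b ∧ cs.length (v * cs.simple a) = cs.length v + 1

/-- `(w, i, j) →_L (u, i', j')` iff both triples are in `Γ(W)`, `u ≤_L w`, `j' = j`, and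
`(w u⁻¹)(α_{i'}) = α_i`. -/
def RedL (cs : CoxeterSystem M W) (x y : W × B × B) : Prop :=
  InGamma cs x ∧ InGamma cs y ∧ WeakLeftLE cs y.1 x.1 ∧ y.2.2 = x.2.2 ∧
    MapsSimple cs (x.1 * y.1⁻¹) y.2.1 x.2.1

/-- `(w, i, j) →_R (u, i', j')` iff both triples are in `Γ(W)`, `u ≤_R w`, `i' = i`, and
`(u⁻¹ w)(α_j) = α_{j'}`. -/
def RedR (cs : CoxeterSystem M W) (x y : W × B × B) : Prop :=
  InGamma cs x ∧ InGamma cs y ∧ WeakRightLE cs y.1 x.1 ∧ y.2.1 = x.2.1 ∧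
    MapsSimple cs (y.1⁻¹ * x.1) x.2.2 y.2.2

/-- `→`: the reflexive-transitive closure of the union of `→_L` and `→_R`. -/
def Red (cs : CoxeterSystem M W) : (W × B × B) → (W × B × B) → Prop :=
  Relation.ReflTransGen (fun x y => RedL cs x y ∨ RedR cs x y)

/-- `↔`: the equivalence relation generated by `→`. -/
def EquivRed (cs : CoxeterSystem M W) : (W × B × B) → (W × B × B) → Prop :=
  Relation.EqvGen (Red cs)

/-- The alternating word `a, b, a, b, …` with `n` letters, starting with `a`. -/
def altWord (a b : B) : ℕ → List B
  | 0 => []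
  | n + 1 => a :: altWord b a n

/-- `w₀(a, b)`: the alternating product `sₐ s_b sₐ ⋯` with `M a b` factors, the longest element
of the subgroup generated by `sₐ` and `s_b` when `M a b` is finite (i.e. nonzero). -/
def w0 (cs : CoxeterSystem M W) (a b : B) : W :=
  cs.wordProd (altWord a b (M a b))

/-- An element is bigrassmannian if it has exactly one left descent and exactly one
right descent. -/
def Bigrassmannian (cs : CoxeterSystem M W) (w : W) : Prop :=
  (∃! i, cs.IsLeftDescent w i) ∧ (∃! j, cs.IsRightDescent w j)

/-- The support of `w`: the set of indices appearing in some reduced word for `w`. -/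
def Supp (cs : CoxeterSystem M W) (w : W) : Set B :=
  {i | ∃ l : List B, cs.IsReduced l ∧ cs.wordProd l = w ∧ i ∈ l}

/-- The relation `(w, i, j) →_{(k,L)} (u, i', j')`. -/
def RedkL (cs : CoxeterSystem M W) (k : B) (x y : W × B × B) : Prop :=
  cs.length y.1 < cs.length x.1 ∧ RedR cs (x.1 * cs.simple k, x.2.1, x.2.2) x ∧
    RedL cs (x.1 * cs.simple k, x.2.1, x.2.2) y ∧ WeakLeftLE cs y.1 x.1

/-- The relation `(w, i, j) →_{(k,R)} (u, i', j')`. -/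
def RedkR (cs : CoxeterSystem M W) (k : B) (x y : W × B × B) : Prop :=
  cs.length y.1 < cs.length x.1 ∧ RedL cs (cs.simple k * x.1, x.2.1, x.2.2) x ∧
    RedR cs (cs.simple k * x.1, x.2.1, x.2.2) y ∧ WeakRightLE cs y.1 x.1

/-- The orthogonality condition for a bigrassmannian element `w` with `D_L(w) = {i}` and
`D_R(w) = {j}`. -/
def OrthCond (cs : CoxeterSystem M W) (w : W) (i j : B) : Prop :=
  (∀ a b : B, M a j = 2 → MapsSimple cs w a b → M b i = 2) ∧
  (∀ a b : B, M a i = 2 → MapsSimple cs w⁻¹ a b → M b j = 2)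


/-!
The Klein four-group generated by `w ↦ sᵢ w` and `w ↦ w sⱼ` preserves the set of `w` with
`sᵢ w = w sⱼ` and acts freely on its complement. On that complement, left multiplication by `sᵢ`
does not change whether `j` is a right descent: in the permutation representation of `W` on
`W × {±1}` behind the strong exchange condition, `w` sends `(sⱼ, 1)` to `(w sⱼ w⁻¹, -1)` exactly
when `j` is a right descent of `w`, and `sᵢ` changes a sign only at `(sᵢ, ±1)`, which is reached
exactly when `sᵢ w = w sⱼ`. Hence every free orbit meets each of the four descent patterns
(`i` a left descent or not, `j` a right descent or not) exactly once, and the element with both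
descents is exactly the one with `ℓ(sᵢ w sⱼ) = ℓ(w) - 2`.
-/

lemma prod_map_alternatingWord_two_mul {G : Type*} [Monoid G] (f : B → G) (i i' : B)
    (m : ℕ) : ((alternatingWord i i' (2 * m)).map f).prod = (f i * f i') ^ m := by
  induction m with
  | zero => simp [alternatingWord]
  | succ m ih =>
    rw [show 2 * (m + 1) = 2 * m + 1 + 1 by ring, alternatingWord_succ, alternatingWord_succ]
    simp [ih, pow_succ]

lemma even_count_of_take_eq_drop {α : Type*} [BEq α] {l : List α} {m : ℕ}
    (h : l.take m = l.drop m) (a : α) : Even (l.count a) := by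
  rw [← List.take_append_drop m l, List.count_append, h]
  exact ⟨_, rfl⟩

lemma conj_apply_eq_iff_eq {G : Type*} [Group G] (g t : G) : MulAut.conj g t = g ↔ t = g := by
  conv_rhs => rw [← (MulAut.conj g).injective.eq_iff]
  rw [MulAut.conj_apply g g, mul_inv_cancel_right]

lemma card_fiber_eq_of_semiconj {α β : Type*} {f : α → β} {e : α ≃ α} {g : β → β}
    (h : Function.Semiconj f e g) (hg : g.Injective) (b : β) :
    Nat.card {x // f x = g b} = Nat.card {x // f x = b} :=
  (Nat.card_congr (e.subtypeEquiv fun x => by rw [h.eq, hg.eq_iff])).symm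

section ReflectionRepresentation

variable (cs : CoxeterSystem M W) [DecidableEq W]

def simplePerm (i : B) : Equiv.Perm (W × ℤˣ) :=
  Function.Involutive.toPerm
    (fun p => (MulAut.conj (cs.simple i) p.1, if p.1 = cs.simple i then -p.2 else p.2))
    (by
      rintro ⟨t, e⟩
      by_cases ht : t = cs.simple i <;>
        simp [ht, mul_assoc, cs.simple_mul_simple_cancel_left, cs.inv_simple,
          mul_eq_one_iff_eq_inv])

lemma simplePerm_apply (i : B) (t : W) (e : ℤˣ) :
    simplePerm cs i (t, e) =
      (MulAut.conj (cs.simple i) t, if t = cs.simple i then -e else e) := rfl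

lemma simplePerm_apply_snd_of_ne (i : B) {p : W × ℤˣ} (h : p.1 ≠ cs.simple i) :
    (simplePerm cs i p).2 = p.2 :=
  if_neg h

lemma prod_map_simplePerm_apply (ω : List B) (t : W) (e : ℤˣ) :
    (ω.map (simplePerm cs)).prod (t, e) =
      (MulAut.conj (cs.wordProd ω) t,
        (-1) ^ (cs.leftInvSeq ω).count (MulAut.conj (cs.wordProd ω) t) * e) := by
  induction ω with
  | nil => simp
  | cons i ω ih =>
    set t' := MulAut.conj (cs.wordProd ω) t
    have hcount : (cs.leftInvSeq (i :: ω)).count (MulAut.conj (cs.simple i) t') =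
        (cs.leftInvSeq ω).count t' + if t' = cs.simple i then 1 else 0 := by
      rw [leftInvSeq, List.count_cons,
        List.count_map_of_injective _ _ (MulAut.conj (cs.simple i)).injective]
      simp only [beq_iff_eq, eq_comm (a := cs.simple i), conj_apply_eq_iff_eq]
    rw [List.map_cons, List.prod_cons, Equiv.Perm.mul_apply, ih, simplePerm_apply, wordProd_cons,
      map_mul, MulAut.mul_apply, hcount]
    split_ifs <;> simp [t', pow_succ]

lemma even_count_leftInvSeq_braidWord (i i' : B) (t : W) :
    Even ((cs.leftInvSeq (alternatingWord i i' (2 * M i i'))).count t) := by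
  refine even_count_of_take_eq_drop (m := M i i') ?_ t
  apply List.ext_getElem (by simp; omega)
  intro k hk _
  simp only [List.getElem_take, List.getElem_drop]
  rw [cs.getElem_leftInvSeq_alternatingWord i i' _ k (by simp at hk; omega),
    cs.getElem_leftInvSeq_alternatingWord i i' _ _ (by simp at hk; omega),
    prod_alternatingWord_eq_mul_pow, prod_alternatingWord_eq_mul_pow,
    show (2 * (M i i' + k) + 1) / 2 = M i i' + k by omega, show (2 * k + 1) / 2 = k by omega,
    pow_add, simple_mul_simple_pow', one_mul]
  simp [parity_simps]

lemma isLiftable_simplePerm : M.IsLiftable (simplePerm cs) := by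
  intro i i'
  rw [← prod_map_alternatingWord_two_mul]
  ext ⟨t, e⟩ : 1
  rw [prod_map_simplePerm_apply, (even_count_leftInvSeq_braidWord cs i i' _).neg_one_pow]
  simp [wordProd, prod_map_alternatingWord_two_mul, simple_mul_simple_pow]

def reflectionRep : W →* Equiv.Perm (W × ℤˣ) :=
  cs.lift ⟨simplePerm cs, isLiftable_simplePerm cs⟩

lemma reflectionRep_simple (i : B) : reflectionRep cs (cs.simple i) = simplePerm cs i :=
  cs.lift_apply_simple _ i

lemma reflectionRep_wordProd_apply (ω : List B) (t : W) (e : ℤˣ) :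
    reflectionRep cs (cs.wordProd ω) (t, e) =
      (MulAut.conj (cs.wordProd ω) t,
        (-1) ^ (cs.leftInvSeq ω).count (MulAut.conj (cs.wordProd ω) t) * e) := by
  rw [← prod_map_simplePerm_apply, wordProd, map_list_prod, List.map_map]
  congr 3
  exact funext (reflectionRep_simple cs)

lemma reflectionRep_apply_fst (w t : W) (e : ℤˣ) :
    (reflectionRep cs w (t, e)).1 = MulAut.conj w t := by
  obtain ⟨ω, -, rfl⟩ := cs.exists_isReduced w
  rw [reflectionRep_wordProd_apply]

lemma reflectionRep_apply_simple_snd_eq_neg_one_iff (w : W) (j : B) :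
    (reflectionRep cs w (cs.simple j, 1)).2 = -1 ↔ cs.IsRightDescent w j := by
  by_cases hj : cs.IsRightDescent w j
  · obtain ⟨ω, hω, hω'⟩ := cs.exists_isReduced (w * cs.simple j)
    have hw : cs.wordProd (ω.concat j) = w := by
      rw [wordProd_concat, ← hω', simple_mul_simple_cancel_right]
    have hred : cs.IsReduced (ω.concat j) := by
      rw [CoxeterSystem.IsReduced, hw, List.length_concat, ← hω.eq, ← hω',
        ← cs.isRightDescent_iff.mp hj]
    have hmem : MulAut.conj w (cs.simple j) ∈ cs.leftInvSeq (ω.concat j) := by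
      rw [leftInvSeq_concat, ← hω', mul_inv_rev, cs.inv_simple, simple_mul_simple_cancel_right]
      simp [mul_assoc]
    rw [← hw, reflectionRep_wordProd_apply, hw,
      List.count_eq_one_of_mem hred.nodup_leftInvSeq hmem]
    simpa using hj
  · obtain ⟨ω, hω, rfl⟩ := cs.exists_isReduced w
    have hnot : MulAut.conj (cs.wordProd ω) (cs.simple j) ∉ cs.leftInvSeq ω := fun hmem =>
      hj (by simpa [IsRightDescent, cs.inv_simple] using
        (cs.isLeftInversion_of_mem_leftInvSeq hω hmem).2)
    rw [reflectionRep_wordProd_apply, List.count_eq_zero_of_not_mem hnot]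
    simp [hj]

end ReflectionRepresentation

section Descents

variable (cs : CoxeterSystem M W) {i j : B} {w : W}

lemma isRightDescent_simple_mul_iff (h : cs.simple i * w ≠ w * cs.simple j) :
    cs.IsRightDescent (cs.simple i * w) j ↔ cs.IsRightDescent w j := by
  classical
  have hne : (reflectionRep cs w (cs.simple j, 1)).1 ≠ cs.simple i := by
    rw [reflectionRep_apply_fst, MulAut.conj_apply]
    contrapose! h
    rw [← h, inv_mul_cancel_right]
  rw [← reflectionRep_apply_simple_snd_eq_neg_one_iff,
    ← reflectionRep_apply_simple_snd_eq_neg_one_iff, map_mul, Equiv.Perm.mul_apply,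
    reflectionRep_simple, simplePerm_apply_snd_of_ne cs i hne]

lemma isLeftDescent_mul_simple_iff (h : cs.simple i * w ≠ w * cs.simple j) :
    cs.IsLeftDescent (w * cs.simple j) i ↔ cs.IsLeftDescent w i := by
  have h' : cs.simple j * w⁻¹ ≠ w⁻¹ * cs.simple i := fun h' =>
    h (by simpa [cs.inv_simple] using congrArg (·⁻¹) h'.symm)
  rw [← cs.isRightDescent_inv_iff, ← cs.isRightDescent_inv_iff, mul_inv_rev, cs.inv_simple]
  exact isRightDescent_simple_mul_iff cs h'

lemma simple_mul_simple_mul_eq_iff :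
    cs.simple i * (cs.simple i * w) = cs.simple i * w * cs.simple j ↔
      cs.simple i * w = w * cs.simple j := by
  rw [simple_mul_simple_cancel_left, ← mul_left_inj (cs.simple j), simple_mul_simple_cancel_right,
    eq_comm]

lemma simple_mul_mul_simple_eq_iff :
    cs.simple i * (w * cs.simple j) = w * cs.simple j * cs.simple j ↔
      cs.simple i * w = w * cs.simple j := by
  rw [simple_mul_simple_cancel_right, ← mul_assoc, ← mul_left_inj (cs.simple j),
    simple_mul_simple_cancel_right]

noncomputable instance (w : W) (i : B) : Decidable (cs.IsLeftDescent w i) :=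
  inferInstanceAs (Decidable (_ < _))

noncomputable instance (w : W) (i : B) : Decidable (cs.IsRightDescent w i) :=
  inferInstanceAs (Decidable (_ < _))

variable [DecidableEq W]

variable (i j) in
noncomputable def descentPattern (w : W) : Option (Bool × Bool) :=
  if cs.simple i * w = w * cs.simple j then none
  else some (cs.IsLeftDescent w i, cs.IsRightDescent w j)

lemma descentPattern_eq_none_iff :
    descentPattern cs i j w = none ↔ cs.simple i * w = w * cs.simple j := by
  unfold descentPattern
  split_ifs with h <;> simp [h]

lemma descentPattern_simple_mul :
    descentPattern cs i j (cs.simple i * w) = (descentPattern cs i j w).map (Prod.map not id) := by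
  unfold descentPattern
  simp only [simple_mul_simple_mul_eq_iff]
  split_ifs with h
  · rfl
  · have hflip : cs.IsLeftDescent (cs.simple i * w) i ↔ ¬cs.IsLeftDescent w i := by
      rw [cs.isLeftDescent_iff_not_isLeftDescent_mul (w := w), not_not]
    simp [hflip, isRightDescent_simple_mul_iff cs h]

lemma descentPattern_mul_simple :
    descentPattern cs i j (w * cs.simple j) = (descentPattern cs i j w).map (Prod.map id not) := by
  unfold descentPattern
  simp only [simple_mul_mul_simple_eq_iff]
  split_ifs with h
  · rfl
  · have hflip : cs.IsRightDescent (w * cs.simple j) j ↔ ¬cs.IsRightDescent w j := by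
      rw [cs.isRightDescent_iff_not_isRightDescent_mul (w := w), not_not]
    simp [hflip, isLeftDescent_mul_simple_iff cs h]

lemma length_simple_mul_mul_simple_add_two_eq_iff :
    cs.length (cs.simple i * w * cs.simple j) + 2 = cs.length w ↔
      descentPattern cs i j w = some (true, true) := by
  unfold descentPattern
  have hL := cs.length_simple_mul w i
  have hR := cs.length_mul_simple w j
  have hLR := cs.length_mul_simple (cs.simple i * w) j
  split_ifs with h
  · simp only [iff_false]
    rw [h, simple_mul_simple_cancel_right]
    omega
  · have hsq := isRightDescent_simple_mul_iff cs h
    simp only [Option.some.injEq, Prod.mk.injEq, decide_eq_true_eq]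
    unfold IsLeftDescent IsRightDescent at hsq ⊢
    omega

lemma card_descentPattern_eq_some (p : Bool × Bool) :
    Nat.card {w // descentPattern cs i j w = some p} =
      Nat.card {w // descentPattern cs i j w = some (true, true)} := by
  have hleft := card_fiber_eq_of_semiconj (e := Equiv.mulLeft (cs.simple i))
    (fun _ => descentPattern_simple_mul cs (j := j))
    (Option.map_injective (Prod.map_injective.2 ⟨Bool.not_injective, Function.injective_id⟩))
  have hright := card_fiber_eq_of_semiconj (e := Equiv.mulRight (cs.simple j))
    (fun _ => descentPattern_mul_simple cs (i := i))
    (Option.map_injective (Prod.map_injective.2 ⟨Function.injective_id, Bool.not_injective⟩))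
  obtain ⟨_ | _, _ | _⟩ := p
  · exact (hleft (some (true, false))).trans (hright (some (true, true)))
  · exact hleft (some (true, true))
  · exact hright (some (true, true))
  · rfl

end Descents

/-- The counting identity underlying the computation of `|Γ(W)|`:
`4 · |{w : ℓ(sᵢ w sⱼ) = ℓ(w) − 2}| + |{w : sᵢ w = w sⱼ}| = |W|`. -/
theorem four_mul_card_gamma_add_card_comm [Finite W] (cs : CoxeterSystem M W) (i j : B) :
    4 * Nat.card {w : W // cs.length (cs.simple i * w * cs.simple j) + 2 = cs.length w}
        + Nat.card {w : W // cs.simple i * w = w * cs.simple j}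
      = Nat.card W := by
  classical
  have hgamma : Nat.card {w : W // cs.length (cs.simple i * w * cs.simple j) + 2 = cs.length w} =
      Nat.card {w // descentPattern cs i j w = some (true, true)} :=
    Nat.card_congr <|
      Equiv.subtypeEquivRight fun _ => length_simple_mul_mul_simple_add_two_eq_iff cs
  have hcomm : Nat.card {w : W // cs.simple i * w = w * cs.simple j} =
      Nat.card {w // descentPattern cs i j w = none} :=
    Nat.card_congr (Equiv.subtypeEquivRight fun _ => (descentPattern_eq_none_iff cs).symm)
  rw [hgamma, hcomm, ← Nat.card_congr (Equiv.sigmaFiberEquiv (descentPattern cs i j)),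
    Nat.card_sigma, Fintype.sum_option]
  simp only [card_descentPattern_eq_some cs, Finset.sum_const, Finset.card_univ,
    Fintype.card_prod, Fintype.card_bool, smul_eq_mul]
  ring

end NilpotencyIndices
end

section
/- The relations →_L and →_R are partial orders on Γ(W): each is reflexive and transitive, and each is antisymmetric (x →_L y and y →_L x imply x = y, and likewise for →_R). -/
open CoxeterSystem

/-!
Reflexivity, transitivity and antisymmetry of `→_L` come from the same properties of the weak
left order together with three facts about the condition `v(α_a) = α_b`: for `v = 1` it says
`a = b`, it is stable under `(v, a, b) ↦ (v⁻¹, b, a)`, and it composes, since `v(α_a) = α_b` and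
`w(α_b) = α_c` give `wv(α_a) = α_c`. The relation `→_R` is the image of `→_L` under
`(w, i, j) ↦ (w⁻¹, j, i)`, so it inherits all three properties.

Composition amounts to the positivity of `wv(α_a) = w(α_b)`, which we read off Tits' sign
representation of `W` on `W × ℤˣ`: its sign cocycle at `sᵢ` is `-1` exactly when `i` is a right
descent. That `s_a = s_b` forces `a = b` is seen in the geometric representation, where `sᵢ sⱼ`
acts as the rotation by `2π / M i j` on the plane spanned by `αᵢ` and `αⱼ`.
-/

theorem Module.End.pow_apply_sub_mem {R V : Type*} [Ring R] [AddCommGroup V] [Module R V]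
    {f : Module.End R V} {U : Submodule R V} (hf : ∀ x, f x - x ∈ U) (n : ℕ) (x : V) :
    (f ^ n) x - x ∈ U := by
  induction n generalizing x with
  | zero => simp
  | succ n ih =>
    rw [pow_succ, Module.End.mul_apply, ← sub_add_sub_cancel _ (f x)]
    exact U.add_mem (ih (f x)) (hf x)

namespace CoxeterMatrix

variable {B : Type*} (M : CoxeterMatrix B)

noncomputable def geomForm (i j : B) : ℝ := -Real.cos (Real.pi / M i j)

/-- `x ↦ B(αᵢ, x)` on `B →₀ ℝ = ⊕ ℝ αⱼ`, for the bilinear form `B(αᵢ, αⱼ) = M.geomForm i j`. -/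
noncomputable def geomPairing (i : B) : (B →₀ ℝ) →ₗ[ℝ] ℝ :=
  Finsupp.linearCombination ℝ (M.geomForm i)

noncomputable def geomReflection (i : B) : Module.End ℝ (B →₀ ℝ) :=
  LinearMap.id - (Finsupp.lsingle i).comp ((2 : ℝ) • M.geomPairing i)

/-- The point `z` of the Euclidean plane `ℂ` with `⟪z, αᵢ⟫ = B(αᵢ, x)` and `⟪z, αⱼ⟫ = B(αⱼ, x)`,
where `αᵢ = 1` and `αⱼ = -exp(-(π / M i j) I)` have inner product `-cos(π / M i j)`. -/
noncomputable def dihedralCoord (i j : B) (x : B →₀ ℝ) : ℂ :=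
  ⟨M.geomPairing i x,
    (M.geomPairing j x + Real.cos (Real.pi / M i j) * M.geomPairing i x) /
      Real.sin (Real.pi / M i j)⟩

variable {M} {i j : B}

theorem geomForm_self (i : B) : M.geomForm i i = 1 := by
  simp [geomForm]

theorem geomForm_comm (i j : B) : M.geomForm i j = M.geomForm j i := by
  rw [geomForm, geomForm, M.symmetric]

theorem geomPairing_single (i j : B) (r : ℝ) :
    M.geomPairing i (Finsupp.single j r) = r * M.geomForm i j := by
  simp [geomPairing]

theorem geomReflection_apply (i : B) (x : B →₀ ℝ) :
    M.geomReflection i x = x - Finsupp.single i (2 * M.geomPairing i x) := by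
  simp [geomReflection]

theorem geomPairing_geomReflection (i j : B) (x : B →₀ ℝ) :
    M.geomPairing j (M.geomReflection i x)
      = M.geomPairing j x - 2 * M.geomForm j i * M.geomPairing i x := by
  rw [geomReflection_apply, map_sub, geomPairing_single]
  ring

theorem geomReflection_mul_self (i : B) : M.geomReflection i * M.geomReflection i = 1 := by
  refine LinearMap.ext fun x => ?_
  rw [Module.End.mul_apply, Module.End.one_apply, geomReflection_apply i (M.geomReflection i x),
    geomPairing_geomReflection, geomForm_self, geomReflection_apply, sub_sub,
    ← Finsupp.single_add, mul_one,
    show 2 * M.geomPairing i x + 2 * (M.geomPairing i x - 2 * M.geomPairing i x) = 0 by ring,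
    Finsupp.single_zero, sub_zero]

theorem two_le_of_ne (hij : i ≠ j) (h0 : M i j ≠ 0) : 2 ≤ M i j := by
  have := M.off_diagonal i j hij
  omega

theorem sin_pi_div_pos (hij : i ≠ j) (h0 : M i j ≠ 0) : 0 < Real.sin (Real.pi / M i j) := by
  have hm : (1 : ℝ) < M i j := by exact_mod_cast two_le_of_ne hij h0
  exact Real.sin_pos_of_pos_of_lt_pi (div_pos Real.pi_pos (by linarith))
    (div_lt_self Real.pi_pos hm)

theorem geomReflection_mul_apply_sub_mem (i j : B) (x : B →₀ ℝ) :
    (M.geomReflection i * M.geomReflection j) x - x ∈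
      Submodule.span ℝ {Finsupp.single i 1, Finsupp.single j 1} := by
  rw [Submodule.mem_span_pair]
  refine ⟨-(2 * M.geomPairing i (M.geomReflection j x)), -(2 * M.geomPairing j x), ?_⟩
  rw [Module.End.mul_apply, geomReflection_apply, geomReflection_apply]
  simp only [Finsupp.smul_single, smul_eq_mul, mul_one, Finsupp.single_neg]
  abel

/-- The Gram matrix of `αᵢ, αⱼ` is nonsingular because `cos² (π / M i j) < 1`. -/
theorem eq_zero_of_mem_span_of_geomPairing_eq_zero (hij : i ≠ j) (h0 : M i j ≠ 0)
    {y : B →₀ ℝ} (hy : y ∈ Submodule.span ℝ {Finsupp.single i 1, Finsupp.single j 1})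
    (hi : M.geomPairing i y = 0) (hj : M.geomPairing j y = 0) : y = 0 := by
  obtain ⟨a, b, rfl⟩ := Submodule.mem_span_pair.mp hy
  have hc : M.geomForm i j ^ 2 < 1 := by
    rw [geomForm, neg_sq, Real.cos_sq']
    linarith [pow_pos (sin_pi_div_pos hij h0) 2]
  simp only [Finsupp.smul_single, smul_eq_mul, mul_one, map_add, geomPairing_single,
    geomForm_self] at hi hj
  rw [geomForm_comm] at hj
  have ha : a * (1 - M.geomForm i j ^ 2) = 0 := by
    linear_combination hi - M.geomForm i j * hj
  obtain rfl : a = 0 := (mul_eq_zero.mp ha).resolve_right (by linarith)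
  obtain rfl : b = 0 := by simpa using hj
  simp

theorem dihedralCoord_mul_apply (hij : i ≠ j) (h0 : M i j ≠ 0) (x : B →₀ ℝ) :
    M.dihedralCoord i j ((M.geomReflection i * M.geomReflection j) x)
      = Complex.exp (↑(2 * (Real.pi / M i j)) * Complex.I) * M.dihedralCoord i j x := by
  have hs := (sin_pi_div_pos hij h0).ne'
  have hK : M.geomForm i j = -Real.cos (Real.pi / M i j) := rfl
  have hK' : M.geomForm j i = -Real.cos (Real.pi / M i j) := by rw [← geomForm_comm, hK]
  apply Complex.ext <;>
  simp only [dihedralCoord, Module.End.mul_apply, geomPairing_geomReflection, geomForm_self,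
    hK, hK', Complex.mul_re, Complex.mul_im, Complex.exp_ofReal_mul_I_re,
    Complex.exp_ofReal_mul_I_im, Real.cos_two_mul, Real.sin_two_mul] <;>
  field_simp
  · ring
  · linear_combination (-2 * Real.cos (Real.pi / M i j) * M.geomPairing i x) *
      Real.sin_sq_add_cos_sq (Real.pi / M i j)

theorem dihedralCoord_pow_apply (hij : i ≠ j) (h0 : M i j ≠ 0) (n : ℕ) (x : B →₀ ℝ) :
    M.dihedralCoord i j (((M.geomReflection i * M.geomReflection j) ^ n) x)
      = Complex.exp (↑(2 * (Real.pi / M i j)) * Complex.I) ^ n * M.dihedralCoord i j x := by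
  induction n with
  | zero => simp
  | succ n ih =>
    rw [pow_succ', Module.End.mul_apply, dihedralCoord_mul_apply hij h0, ih, pow_succ', mul_assoc]

theorem dihedralCoord_pow_coxeter_apply (hij : i ≠ j) (h0 : M i j ≠ 0) (x : B →₀ ℝ) :
    M.dihedralCoord i j (((M.geomReflection i * M.geomReflection j) ^ M i j) x)
      = M.dihedralCoord i j x := by
  have hm : (M i j : ℂ) ≠ 0 := Nat.cast_ne_zero.mpr h0
  have hturn : (M i j : ℂ) * (↑(2 * (Real.pi / M i j)) * Complex.I) = 2 * Real.pi * Complex.I := by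
    push_cast
    field_simp
  rw [dihedralCoord_pow_apply hij h0, ← Complex.exp_nat_mul, hturn, Complex.exp_two_pi_mul_I,
    one_mul]

theorem geomPairing_eq_of_dihedralCoord_eq (hij : i ≠ j) (h0 : M i j ≠ 0) {x y : B →₀ ℝ}
    (h : M.dihedralCoord i j x = M.dihedralCoord i j y) :
    M.geomPairing i x = M.geomPairing i y ∧ M.geomPairing j x = M.geomPairing j y := by
  have hre := congrArg Complex.re h
  have him := congrArg Complex.im h
  simp only [dihedralCoord] at hre him
  rw [hre, div_left_inj' (sin_pi_div_pos hij h0).ne', add_left_inj] at him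
  exact ⟨hre, him⟩

theorem geomReflection_mul_pow_coxeter (hij : i ≠ j) (h0 : M i j ≠ 0) :
    (M.geomReflection i * M.geomReflection j) ^ M i j = 1 := by
  refine LinearMap.ext fun x => ?_
  rw [Module.End.one_apply, ← sub_eq_zero]
  obtain ⟨hi, hj⟩ :=
    geomPairing_eq_of_dihedralCoord_eq hij h0 (dihedralCoord_pow_coxeter_apply hij h0 x)
  exact eq_zero_of_mem_span_of_geomPairing_eq_zero hij h0
    (Module.End.pow_apply_sub_mem (geomReflection_mul_apply_sub_mem i j) _ x)
    (by rw [map_sub, hi, sub_self]) (by rw [map_sub, hj, sub_self])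

theorem isLiftable_geomReflection : M.IsLiftable M.geomReflection := by
  intro i j
  by_cases hij : i = j
  · rw [hij, M.diagonal, pow_one, geomReflection_mul_self]
  by_cases h0 : M i j = 0
  · rw [h0, pow_zero]
  exact geomReflection_mul_pow_coxeter hij h0

end CoxeterMatrix

namespace CoxeterSystem

variable {B W : Type*} [Group W] {M : CoxeterMatrix B} (cs : CoxeterSystem M W)

theorem simple_injective : Function.Injective cs.simple := by
  intro i j hij
  by_contra hne
  have hS := congrArg (cs.lift ⟨M.geomReflection, M.isLiftable_geomReflection⟩) hij
  rw [cs.lift_apply_simple, cs.lift_apply_simple] at hS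
  have hi := congrArg (fun f : Module.End ℝ (B →₀ ℝ) => f (Finsupp.single i 1) i) hS
  simp [CoxeterMatrix.geomReflection_apply, CoxeterMatrix.geomPairing_single,
    CoxeterMatrix.geomForm_self, Ne.symm hne] at hi

open Classical in
noncomputable def signAt (t x : W) : ℤˣ := if x = t then -1 else 1

theorem signAt_conj (g t x : W) : signAt t (g * x * g⁻¹) = signAt (g⁻¹ * t * g) x := by
  have : g * x * g⁻¹ = t ↔ x = g⁻¹ * t * g := by
    constructor <;> rintro rfl <;> group
  unfold signAt
  by_cases h : x = g⁻¹ * t * g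
  · rw [if_pos (this.mpr h), if_pos h]
  · rw [if_neg (mt this.mp h), if_neg h]

noncomputable def signPerm (i : B) : Equiv.Perm (W × ℤˣ) :=
  Function.Involutive.toPerm
    (fun p => (cs.simple i * p.1 * cs.simple i, p.2 * signAt (cs.simple i) p.1)) fun ⟨t, ε⟩ => by
      have h : signAt (cs.simple i) (cs.simple i * t * cs.simple i) = signAt (cs.simple i) t := by
        simpa [cs.inv_simple, mul_assoc] using signAt_conj (cs.simple i) (cs.simple i) t
      refine Prod.ext ?_ ?_
      · simp [mul_assoc]
      · dsimp only
        rw [h, mul_assoc, Int.units_mul_self, mul_one]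

theorem signPerm_apply (i : B) (t : W) (ε : ℤˣ) :
    cs.signPerm i (t, ε) = (cs.simple i * t * cs.simple i, ε * signAt (cs.simple i) t) := rfl

theorem signAt_mul_pow_conj {g s : W} (hgs : g⁻¹ * s = s * g) (r : ℕ) (t : W) :
    signAt (s * g ^ r) (g * t * g⁻¹) = signAt (s * g ^ (r + 1 + 1)) t := by
  rw [signAt_conj, ← mul_assoc, hgs, mul_assoc, mul_assoc, ← pow_succ, ← pow_succ']

theorem signPerm_mul_signPerm_apply (i j : B) (t : W) (ε : ℤˣ) :
    (cs.signPerm i * cs.signPerm j) (t, ε) =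
      (cs.simple i * cs.simple j * t * (cs.simple i * cs.simple j)⁻¹,
        ε * signAt (cs.simple j) t * signAt (cs.simple j * (cs.simple i * cs.simple j)) t) := by
  have hsign : signAt (cs.simple i) (cs.simple j * t * cs.simple j)
      = signAt (cs.simple j * (cs.simple i * cs.simple j)) t := by
    simpa [cs.inv_simple, mul_assoc] using signAt_conj (cs.simple j) (cs.simple i) t
  rw [Equiv.Perm.mul_apply, signPerm_apply, signPerm_apply, hsign]
  simp [mul_assoc, cs.inv_simple]

theorem signPerm_mul_signPerm_pow_apply (i j : B) (n : ℕ) (t : W) (ε : ℤˣ) :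
    ((cs.signPerm i * cs.signPerm j) ^ n) (t, ε) =
      ((cs.simple i * cs.simple j) ^ n * t * ((cs.simple i * cs.simple j) ^ n)⁻¹,
        ε * ∏ r ∈ Finset.range (2 * n),
          signAt (cs.simple j * (cs.simple i * cs.simple j) ^ r) t) := by
  have hgs : (cs.simple i * cs.simple j)⁻¹ * cs.simple j
      = cs.simple j * (cs.simple i * cs.simple j) := by
    simp [mul_assoc, cs.inv_simple]
  induction n generalizing t ε with
  | zero => simp
  | succ n ih =>
    rw [pow_succ, Equiv.Perm.mul_apply, signPerm_mul_signPerm_apply, ih]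
    simp only [signAt_mul_pow_conj hgs, Prod.mk.injEq]
    constructor
    · simp only [pow_succ, mul_inv_rev, mul_assoc]
    · rw [show 2 * (n + 1) = 2 * n + 1 + 1 by ring, Finset.prod_range_succ',
        Finset.prod_range_succ', pow_zero, mul_one, pow_one]
      ac_rfl

theorem isLiftable_signPerm : M.IsLiftable cs.signPerm := by
  intro i j
  -- `r ↦ sⱼ (sᵢ sⱼ)^r` has period `M i j`, so the product over `r < 2 * M i j` is a square.
  refine Equiv.ext fun ⟨t, ε⟩ => ?_
  have hper (r : ℕ) : signAt (cs.simple j * (cs.simple i * cs.simple j) ^ (M i j + r)) t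
      = signAt (cs.simple j * (cs.simple i * cs.simple j) ^ r) t := by
    rw [pow_add, cs.simple_mul_simple_pow, one_mul]
  rw [signPerm_mul_signPerm_pow_apply, cs.simple_mul_simple_pow, two_mul, Finset.prod_range_add]
  simp [hper, Int.units_mul_self]

noncomputable def signRep : W →* Equiv.Perm (W × ℤˣ) :=
  cs.lift ⟨cs.signPerm, cs.isLiftable_signPerm⟩

theorem signRep_simple (i : B) : cs.signRep (cs.simple i) = cs.signPerm i :=
  cs.lift_apply_simple cs.isLiftable_signPerm i

theorem signRep_wordProd (ω : List B) (t : W) (ε : ℤˣ) :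
    cs.signRep (cs.wordProd ω) (t, ε) = (cs.wordProd ω * t * (cs.wordProd ω)⁻¹,
      ε * ((cs.rightInvSeq ω).map (signAt · t)).prod) := by
  induction ω generalizing t ε with
  | nil => simp
  | cons i ω ih =>
    rw [cs.wordProd_cons, map_mul, Equiv.Perm.mul_apply, ih, signRep_simple, signPerm_apply,
      signAt_conj]
    simp only [rightInvSeq, List.map_cons, List.prod_cons, Prod.mk.injEq]
    exact ⟨by simp [mul_assoc, cs.inv_simple], by ac_rfl⟩

/-- For a reflection `t`, this is `-1` exactly when `ℓ(w t) < ℓ(w)`, i.e. when `w` sends the root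
of `t` to a negative root. -/
noncomputable def inversionSign (w t : W) : ℤˣ := (cs.signRep w (t, 1)).2

theorem signRep_apply (w t : W) (ε : ℤˣ) :
    cs.signRep w (t, ε) = (w * t * w⁻¹, ε * cs.inversionSign w t) := by
  obtain ⟨ω, rfl⟩ := cs.wordProd_surjective w
  simp [inversionSign, signRep_wordProd]

theorem inversionSign_mul (w v t : W) :
    cs.inversionSign (w * v) t = cs.inversionSign v t * cs.inversionSign w (v * t * v⁻¹) := by
  show (cs.signRep (w * v) (t, 1)).2 = _
  rw [map_mul, Equiv.Perm.mul_apply, signRep_apply, signRep_apply, one_mul]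

theorem inversionSign_simple_self (i : B) : cs.inversionSign (cs.simple i) (cs.simple i) = -1 := by
  simp [inversionSign, signRep_simple, signPerm_apply, signAt]

theorem inversionSign_simple_of_not_isRightDescent {w : W} {i : B}
    (h : ¬cs.IsRightDescent w i) : cs.inversionSign w (cs.simple i) = 1 := by
  obtain ⟨ω, hω, rfl⟩ := cs.exists_isReduced w
  rw [inversionSign, signRep_wordProd, one_mul]
  refine List.prod_eq_one fun x hx => ?_
  obtain ⟨r, hr, rfl⟩ := List.mem_map.mp hx
  have hne : cs.simple i ≠ r := fun hir =>
    h (cs.isRightInversion_of_mem_rightInvSeq hω (hir ▸ hr)).2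
  simp [signAt, hne]

theorem inversionSign_simple_of_isRightDescent {w : W} {i : B}
    (h : cs.IsRightDescent w i) : cs.inversionSign w (cs.simple i) = -1 := by
  have h' := cs.isRightDescent_iff_not_isRightDescent_mul.mp h
  calc cs.inversionSign w (cs.simple i)
      = cs.inversionSign (w * cs.simple i * cs.simple i) (cs.simple i) := by
        rw [cs.simple_mul_simple_cancel_right]
    _ = -1 := by
        rw [inversionSign_mul, inversionSign_simple_self, cs.inv_simple,
          cs.simple_mul_simple_cancel_right, inversionSign_simple_of_not_isRightDescent cs h',
          mul_one]

theorem inversionSign_simple_eq_one_iff {w : W} {i : B} :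
    cs.inversionSign w (cs.simple i) = 1 ↔ ¬cs.IsRightDescent w i :=
  ⟨fun h hd => by simp [inversionSign_simple_of_isRightDescent cs hd] at h,
    inversionSign_simple_of_not_isRightDescent cs⟩

/-- In terms of roots: if `v(α_a) = α_b` is positive and `w(α_b)` is positive, then so is
`wv(α_a)`. -/
theorem not_isRightDescent_mul_of_conj {v w : W} {a b : B}
    (hconj : v * cs.simple a * v⁻¹ = cs.simple b) (hv : ¬cs.IsRightDescent v a)
    (hw : ¬cs.IsRightDescent w b) : ¬cs.IsRightDescent (w * v) a := by
  rw [← inversionSign_simple_eq_one_iff] at hv hw ⊢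
  rw [inversionSign_mul, hv, hconj, hw, one_mul]

end CoxeterSystem

namespace NilpotencyIndices

variable {B : Type*} {W : Type*} [Group W] {M : CoxeterMatrix B}

section

variable {cs : CoxeterSystem M W}

theorem mapsSimple_one_iff {a b : B} : MapsSimple cs 1 a b ↔ a = b := by
  refine ⟨fun h => cs.simple_injective (by simpa using h.1), ?_⟩
  rintro rfl
  exact ⟨by simp, by simp [cs.length_simple]⟩

theorem MapsSimple.mul {v w : W} {a b c : B} (hv : MapsSimple cs v a b)
    (hw : MapsSimple cs w b c) : MapsSimple cs (w * v) a c := by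
  refine ⟨?_, ?_⟩
  · rw [mul_inv_rev, show w * v * cs.simple a * (v⁻¹ * w⁻¹) = w * (v * cs.simple a * v⁻¹) * w⁻¹ by
      group, hv.1, hw.1]
  · rw [← cs.not_isRightDescent_iff]
    exact cs.not_isRightDescent_mul_of_conj hv.1 (cs.not_isRightDescent_iff.mpr hv.2)
      (cs.not_isRightDescent_iff.mpr hw.2)

theorem MapsSimple.inv {v : W} {a b : B} (h : MapsSimple cs v a b) : MapsSimple cs v⁻¹ b a := by
  have hswap : v⁻¹ * cs.simple b = cs.simple a * v⁻¹ := by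
    rw [← h.1]
    group
  refine ⟨by rw [inv_inv, hswap]; group, ?_⟩
  rw [hswap, ← cs.length_inv, mul_inv_rev, inv_inv, cs.inv_simple, h.2, cs.length_inv]

theorem mapsSimple_inv_iff {v : W} {a b : B} : MapsSimple cs v⁻¹ b a ↔ MapsSimple cs v a b :=
  ⟨fun h => by simpa using h.inv, MapsSimple.inv⟩

theorem weakLeftLE_refl (w : W) : WeakLeftLE cs w w := by
  simp [WeakLeftLE]

theorem WeakLeftLE.trans {u v w : W} (huv : WeakLeftLE cs u v) (hvw : WeakLeftLE cs v w) :
    WeakLeftLE cs u w := by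
  unfold WeakLeftLE at *
  have h₁ : cs.length (w * u⁻¹) ≤ cs.length (w * v⁻¹) + cs.length (v * u⁻¹) := by
    simpa [mul_assoc] using cs.length_mul_le (w * v⁻¹) (v * u⁻¹)
  have h₂ : cs.length w ≤ cs.length (w * u⁻¹) + cs.length u := by
    simpa using cs.length_mul_le (w * u⁻¹) u
  omega

theorem WeakLeftLE.antisymm {u v : W} (huv : WeakLeftLE cs u v) (hvu : WeakLeftLE cs v u) :
    u = v := by
  unfold WeakLeftLE at huv hvu
  exact (mul_inv_eq_one.mp (cs.length_eq_zero_iff.mp (by omega))).symm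

theorem weakLeftLE_inv_iff {v w : W} : WeakLeftLE cs v⁻¹ w⁻¹ ↔ WeakRightLE cs v w := by
  rw [WeakLeftLE, WeakRightLE, inv_inv, cs.length_inv, cs.length_inv, ← cs.length_inv (w⁻¹ * v),
    mul_inv_rev, inv_inv]

def invTriple (x : W × B × B) : W × B × B := (x.1⁻¹, x.2.2, x.2.1)

theorem invTriple_injective : Function.Injective (invTriple : W × B × B → W × B × B) := by
  rintro ⟨w, i, j⟩ ⟨w', i', j'⟩ h
  simp_all [invTriple]

theorem inGamma_invTriple {x : W × B × B} : InGamma cs (invTriple x) ↔ InGamma cs x := by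
  have h : (cs.simple x.2.2 * x.1⁻¹ * cs.simple x.2.1)⁻¹
      = cs.simple x.2.1 * x.1 * cs.simple x.2.2 := by
    simp [mul_assoc, cs.inv_simple]
  simp only [InGamma, invTriple]
  rw [← cs.length_inv (cs.simple x.2.2 * x.1⁻¹ * cs.simple x.2.1), h, cs.length_inv]

theorem redR_iff_redL_invTriple {x y : W × B × B} :
    RedR cs x y ↔ RedL cs (invTriple x) (invTriple y) := by
  rw [RedR, RedL, inGamma_invTriple, inGamma_invTriple, ← weakLeftLE_inv_iff, ← mapsSimple_inv_iff,
    mul_inv_rev, inv_inv]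
  simp only [invTriple, inv_inv]

theorem redL_refl {x : W × B × B} (hx : InGamma cs x) : RedL cs x x :=
  ⟨hx, hx, weakLeftLE_refl x.1, rfl, by rw [mul_inv_cancel, mapsSimple_one_iff]⟩

theorem RedL.trans {x y z : W × B × B} (hxy : RedL cs x y) (hyz : RedL cs y z) : RedL cs x z := by
  obtain ⟨hx, -, hyx, hj, hxy⟩ := hxy
  obtain ⟨-, hz, hzy, hj', hyz⟩ := hyz
  refine ⟨hx, hz, hzy.trans hyx, hj'.trans hj, ?_⟩
  simpa [mul_assoc] using hyz.mul hxy

theorem RedL.antisymm {x y : W × B × B} (hxy : RedL cs x y) (hyx : RedL cs y x) : x = y := by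
  have hw : y.1 = x.1 := hxy.2.2.1.antisymm hyx.2.2.1
  have hi := hxy.2.2.2.2
  rw [hw, mul_inv_cancel, mapsSimple_one_iff] at hi
  exact Prod.ext hw.symm (Prod.ext hi.symm hxy.2.2.2.1.symm)

theorem redR_refl {x : W × B × B} (hx : InGamma cs x) : RedR cs x x :=
  redR_iff_redL_invTriple.mpr (redL_refl (inGamma_invTriple.mpr hx))

theorem RedR.trans {x y z : W × B × B} (hxy : RedR cs x y) (hyz : RedR cs y z) : RedR cs x z :=
  redR_iff_redL_invTriple.mpr
    ((redR_iff_redL_invTriple.mp hxy).trans (redR_iff_redL_invTriple.mp hyz))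

theorem RedR.antisymm {x y : W × B × B} (hxy : RedR cs x y) (hyx : RedR cs y x) : x = y :=
  invTriple_injective
    ((redR_iff_redL_invTriple.mp hxy).antisymm (redR_iff_redL_invTriple.mp hyx))

end

/-- The relations `→_L` and `→_R` are partial orders on `Γ(W)`: reflexive (on `Γ(W)`),
transitive, and antisymmetric. -/
theorem redL_redR_partialOrders (cs : CoxeterSystem M W) :
    ((∀ x : W × B × B, InGamma cs x → RedL cs x x) ∧
      (∀ x y z : W × B × B, RedL cs x y → RedL cs y z → RedL cs x z) ∧
      (∀ x y : W × B × B, RedL cs x y → RedL cs y x → x = y)) ∧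
    ((∀ x : W × B × B, InGamma cs x → RedR cs x x) ∧
      (∀ x y z : W × B × B, RedR cs x y → RedR cs y z → RedR cs x z) ∧
      (∀ x y : W × B × B, RedR cs x y → RedR cs y x → x = y)) :=
  ⟨⟨fun _ => redL_refl, fun _ _ _ => RedL.trans, fun _ _ => RedL.antisymm⟩,
    ⟨fun _ => redR_refl, fun _ _ _ => RedR.trans, fun _ _ => RedR.antisymm⟩⟩

end NilpotencyIndices
end

section
/- If w ∈ W has exactly one left descent or exactly one right descent, then the support of w is connected in the Coxeter diagram: there do not exist nonempty disjoint sets I₁, I₂ ⊆ I with I₁ ∪ I₂ = supp(w) and M i j = 2 for all i ∈ I₁ and j ∈ I₂. -/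
open CoxeterSystem

namespace NilpotencyIndices

variable {B : Type*} {W : Type*} [Group W] {M : CoxeterMatrix B}

/-!
Letters from `I₁` and `I₂` commute, so a reduced word for `w` can be sorted both as its
`I₁`-letters followed by its `I₂`-letters and the other way round, each time still reduced.
Hence the first and the last letter of each nonempty part are a left and a right descent of `w`.
A reduced word through a point of `I₁`, and one through a point of `I₂`, then give `w` left and
right descents in both parts.
-/

lemma simple_commute_of_M_eq_two (cs : CoxeterSystem M W) {a b : B} (h : M a b = 2) :
    Commute (cs.simple a) (cs.simple b) := by
  have hsq : (cs.simple a * cs.simple b) ^ 2 = 1 := h ▸ cs.simple_mul_simple_pow a b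
  have hinv := eq_inv_of_mul_eq_one_left (pow_two (cs.simple a * cs.simple b) ▸ hsq)
  rwa [mul_inv_rev, cs.inv_simple, cs.inv_simple] at hinv

lemma isReduced_of_wordProd_eq (cs : CoxeterSystem M W) {l l' : List B} (hl : cs.IsReduced l)
    (hprod : cs.wordProd l' = cs.wordProd l) (hlen : l'.length = l.length) : cs.IsReduced l' := by
  rw [CoxeterSystem.IsReduced, hprod, hlen]
  exact hl

lemma isLeftDescent_wordProd_cons (cs : CoxeterSystem M W) {i : B} {l : List B}
    (hl : cs.IsReduced (i :: l)) : cs.IsLeftDescent (cs.wordProd (i :: l)) i := by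
  rw [CoxeterSystem.IsLeftDescent, cs.wordProd_cons, cs.simple_mul_simple_cancel_left,
    ← cs.wordProd_cons, hl.eq]
  exact (cs.length_wordProd_le l).trans_lt (Nat.lt_succ_self _)

lemma isRightDescent_wordProd_append_singleton (cs : CoxeterSystem M W) {j : B} {l : List B}
    (hl : cs.IsReduced (l ++ [j])) : cs.IsRightDescent (cs.wordProd (l ++ [j])) j := by
  have hrev : cs.IsReduced (j :: l.reverse) := by
    simpa using (cs.isReduced_reverse_iff _).mpr hl
  rw [← cs.isLeftDescent_inv_iff, ← cs.wordProd_reverse]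
  simpa using isLeftDescent_wordProd_cons cs hrev

lemma wordProd_eq_filter_mul_filter_not (cs : CoxeterSystem M W) (p : B → Bool) :
    ∀ l : List B, (∀ x ∈ l, ∀ y ∈ l, p x → ¬ p y → Commute (cs.simple x) (cs.simple y)) →
      cs.wordProd l = cs.wordProd (l.filter p) * cs.wordProd (l.filter (!p ·))
  | [], _ => by simp
  | x :: l, h => by
    have ih := wordProd_eq_filter_mul_filter_not cs p l
      fun a ha b hb => h a (List.mem_cons_of_mem _ ha) b (List.mem_cons_of_mem _ hb)
    cases hx : p x
    · have hcomm : Commute (cs.wordProd (l.filter p)) (cs.simple x) := by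
        refine Commute.list_prod_left _ _ fun g hg => ?_
        obtain ⟨y, hy, rfl⟩ := List.mem_map.mp hg
        rw [List.mem_filter] at hy
        exact h y (List.mem_cons_of_mem _ hy.1) x List.mem_cons_self hy.2 (by simp [hx])
      simp only [List.filter_cons, hx, Bool.not_false, if_true, Bool.false_eq_true, if_false,
        cs.wordProd_cons, ih]
      rw [← mul_assoc, ← mul_assoc, hcomm.eq]
    · simp only [List.filter_cons, hx, cs.wordProd_cons, ih, if_true, Bool.not_true,
        Bool.false_eq_true, if_false, mul_assoc]

lemma exists_descents_of_isReduced (cs : CoxeterSystem M W) (p : B → Bool) {l : List B}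
    (hl : cs.IsReduced l) (hM : ∀ x ∈ l, ∀ y ∈ l, p x → ¬ p y → M x y = 2)
    (hp : ∃ x ∈ l, p x) :
    (∃ i, p i ∧ cs.IsLeftDescent (cs.wordProd l) i) ∧
      ∃ j, p j ∧ cs.IsRightDescent (cs.wordProd l) j := by
  have hsplit := wordProd_eq_filter_mul_filter_not cs p l
    fun x hx y hy hpx hpy => simple_commute_of_M_eq_two cs (hM x hx y hy hpx hpy)
  have hsplit_swap : cs.wordProd l = cs.wordProd (l.filter (!p ·)) * cs.wordProd (l.filter p) := by
    simpa using wordProd_eq_filter_mul_filter_not cs (!p ·) l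
      fun x hx y hy hpx hpy => (simple_commute_of_M_eq_two cs
        (hM y hy x hx (by simpa using hpy) (by simpa using hpx))).symm
  have hlen : (l.filter p).length + (l.filter (!p ·)).length = l.length := by
    simpa using (List.filter_append_perm p l).length_eq
  have hred : cs.IsReduced (l.filter p ++ l.filter (!p ·)) :=
    isReduced_of_wordProd_eq cs hl (by rw [cs.wordProd_append, hsplit]) (by simp [hlen])
  have hred' : cs.IsReduced (l.filter (!p ·) ++ l.filter p) :=
    isReduced_of_wordProd_eq cs hl (by rw [cs.wordProd_append, hsplit_swap])
      (by simp [← hlen, Nat.add_comm])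
  have hne : l.filter p ≠ [] := by
    obtain ⟨x, hx, hpx⟩ := hp
    exact List.ne_nil_of_mem (List.mem_filter.mpr ⟨hx, hpx⟩)
  obtain ⟨i, t, hi⟩ := List.exists_cons_of_ne_nil hne
  obtain ⟨t', j, hj⟩ : ∃ t' j, l.filter p = t' ++ [j] :=
    ⟨_, _, (List.dropLast_append_getLast hne).symm⟩
  have hpi : p i := (List.mem_filter.mp (hi ▸ List.mem_cons_self)).2
  have hpj : p j := (List.mem_filter.mp (hj ▸ List.mem_append_right _ List.mem_cons_self)).2
  refine ⟨⟨i, hpi, ?_⟩, ⟨j, hpj, ?_⟩⟩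
  · rw [hi, List.cons_append] at hred
    rw [hsplit, ← cs.wordProd_append, hi, List.cons_append]
    exact isLeftDescent_wordProd_cons cs hred
  · rw [hj, ← List.append_assoc] at hred'
    rw [hsplit_swap, ← cs.wordProd_append, hj, ← List.append_assoc]
    exact isRightDescent_wordProd_append_singleton cs hred'

lemma exists_descents_mem_of_mem_supp (cs : CoxeterSystem M W) {w : W} {I J : Set B}
    (hsupp : Supp cs w ⊆ I ∪ J) (hM : ∀ i ∈ I, ∀ j ∈ J, M i j = 2) {c : B}
    (hc : c ∈ Supp cs w) (hcI : c ∈ I) :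
    (∃ i ∈ I, cs.IsLeftDescent w i) ∧ ∃ j ∈ I, cs.IsRightDescent w j := by
  classical
  obtain ⟨l, hl, rfl, hcl⟩ := hc
  have hlJ : ∀ y ∈ l, y ∉ I → y ∈ J := fun y hy hyI =>
    (hsupp ⟨l, hl, rfl, hy⟩).resolve_left hyI
  simpa using exists_descents_of_isReduced cs (fun x => decide (x ∈ I)) hl
    (fun x _ y hy hx hyI => hM x (by simpa using hx) y (hlJ y hy (by simpa using hyI)))
    ⟨c, hcl, by simpa using hcI⟩

/-- If `w` has exactly one left descent or exactly one right descent, then the support of `w`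
is connected in the Coxeter diagram. -/
theorem support_connected (cs : CoxeterSystem M W) (w : W)
    (h : (∃! i, cs.IsLeftDescent w i) ∨ (∃! j, cs.IsRightDescent w j)) :
    ¬ ∃ I₁ I₂ : Set B, I₁.Nonempty ∧ I₂.Nonempty ∧ Disjoint I₁ I₂ ∧
        I₁ ∪ I₂ = Supp cs w ∧ ∀ i ∈ I₁, ∀ j ∈ I₂, M i j = 2 := by
  rintro ⟨I₁, I₂, ⟨a, ha⟩, ⟨b, hb⟩, hdisj, hunion, hM⟩
  obtain ⟨⟨i₁, hi₁, hli₁⟩, j₁, hj₁, hrj₁⟩ :=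
    exists_descents_mem_of_mem_supp cs hunion.ge hM (hunion ▸ Or.inl ha) ha
  obtain ⟨⟨i₂, hi₂, hli₂⟩, j₂, hj₂, hrj₂⟩ :=
    exists_descents_mem_of_mem_supp cs (hunion.ge.trans (Set.union_comm I₁ I₂).le)
      (fun i hi j hj => M.symmetric j i ▸ hM j hj i hi) (hunion ▸ Or.inr hb) hb
  rcases h with ⟨i, -, hi⟩ | ⟨j, -, hj⟩
  · exact hdisj.ne_of_mem hi₁ hi₂ ((hi i₁ hli₁).trans (hi i₂ hli₂).symm)
  · exact hdisj.ne_of_mem hj₁ hj₂ ((hj j₁ hrj₁).trans (hj j₂ hrj₂).symm)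

end NilpotencyIndices
end

section
/- For n ≥ 2, a permutation σ ∈ S_n is bigrassmannian with full support if and only if there exist integers i, k ≥ 1 with i + k = n such that σ(t) = t + k for all 1 ≤ t ≤ i and σ(t) = t − i for all i < t ≤ n. Consequently, S_n contains exactly n − 1 bigrassmannian permutations of full support. -/
/-! If `σ` has a unique right descent `a`, it increases on the blocks `[0, a]` and `[a + 1, n - 1]`.
Full support forbids `σ 0 = 0` and `σ (n - 1) = n - 1`, so the value `0` sits at position `a + 1`
and the value `n - 1` at position `a`: anywhere else they would create a second descent. Applied to
`σ⁻¹`, whose unique descent is the left descent `b` of `σ`, this gives `σ 0 = b + 1` and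
`σ (n - 1) = b`. An increasing run of integers has no room between its endpoint values, which forces
`σ x = x + (b + 1)` on the first block and `σ x = x - (a + 1)` on the second. Conversely, these are
the rotations `x ↦ x + k` (mod `n`) with `0 < k < n`, and each of them is bigrassmannian of full
support. -/

namespace NilpotencyIndices


/-- `a` is a (combinatorial) right descent of `σ`: `σ(a) > σ(a+1)`
(`a` ranges over positions having a successor). -/
def IsRightDescentPerm {n : ℕ} (σ : Equiv.Perm (Fin n)) (a : Fin n) : Prop :=
  ∃ b : Fin n, (b : ℕ) = (a : ℕ) + 1 ∧ σ b < σ a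

/-- `a` is a left descent of `σ`: `σ⁻¹(a) > σ⁻¹(a+1)`. -/
def IsLeftDescentPerm {n : ℕ} (σ : Equiv.Perm (Fin n)) (a : Fin n) : Prop :=
  IsRightDescentPerm σ⁻¹ a

/-- `σ` is bigrassmannian: it has exactly one right descent and exactly one left descent. -/
def BigrassmannianPerm {n : ℕ} (σ : Equiv.Perm (Fin n)) : Prop :=
  (∃! a, IsRightDescentPerm σ a) ∧ (∃! a, IsLeftDescentPerm σ a)

/-- `σ` has full support: `σ({1, …, m}) ≠ {1, …, m}` for every `1 ≤ m ≤ n - 1`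
(0-based: the initial segment of size `m` is not stabilized). -/
def FullSupportPerm {n : ℕ} (σ : Equiv.Perm (Fin n)) : Prop :=
  ∀ m : ℕ, 1 ≤ m → m ≤ n - 1 →
    (⇑σ) '' {x : Fin n | (x : ℕ) < m} ≠ {x : Fin n | (x : ℕ) < m}

section

variable {n : ℕ} {σ : Equiv.Perm (Fin n)}

theorem isRightDescentPerm_iff {a b : Fin n} (hab : (b : ℕ) = a + 1) :
    IsRightDescentPerm σ a ↔ σ b < σ a := by
  refine ⟨fun ⟨b', hb', h⟩ => ?_, fun h => ⟨b, hab, h⟩⟩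
  obtain rfl : b' = b := Fin.ext (by omega)
  exact h

theorem isRightDescentPerm_of_apply_eq_top [NeZero n] {a b : Fin n} (hab : (b : ℕ) = a + 1)
    (ha : σ a = ⊤) : IsRightDescentPerm σ a := by
  refine ⟨b, hab, ha ▸ lt_top_iff_ne_top.mpr fun hb => ?_⟩
  have := σ.injective (hb.trans ha.symm)
  rw [Fin.ext_iff] at this
  omega

theorem isRightDescentPerm_of_apply_eq_bot [NeZero n] {a b : Fin n} (hab : (b : ℕ) = a + 1)
    (hb : σ b = ⊥) : IsRightDescentPerm σ a := by
  refine ⟨b, hab, hb ▸ bot_lt_iff_ne_bot.mpr fun ha => ?_⟩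
  have := σ.injective (ha.trans hb.symm)
  rw [Fin.ext_iff] at this
  omega

theorem apply_eq_top_of_forall_isRightDescentPerm_eq [NeZero n] {a : Fin n}
    (hσ : ∀ r, IsRightDescentPerm σ r → r = a) (htop : σ ⊤ ≠ ⊤) : σ a = ⊤ := by
  set q := σ⁻¹ ⊤
  have hq : σ q = ⊤ := σ.apply_symm_apply ⊤
  have hq_lt : (q : ℕ) < n - 1 := by
    rw [← Fin.val_top, ← Fin.lt_def, lt_top_iff_ne_top]
    rintro hq_top
    exact htop (hq_top ▸ hq)
  rw [← hσ q (isRightDescentPerm_of_apply_eq_top (b := ⟨q + 1, by omega⟩) rfl hq), hq]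

theorem apply_eq_bot_of_forall_isRightDescentPerm_eq [NeZero n] {a b : Fin n}
    (hab : (b : ℕ) = a + 1) (hσ : ∀ r, IsRightDescentPerm σ r → r = a) (hbot : σ ⊥ ≠ ⊥) :
    σ b = ⊥ := by
  set p := σ⁻¹ ⊥
  have hp : σ p = ⊥ := σ.apply_symm_apply ⊥
  have hp_pos : 0 < (p : ℕ) := by
    rw [← Fin.val_zero n, ← bot_eq_zero, ← Fin.lt_def, bot_lt_iff_ne_bot]
    rintro hp_bot
    exact hbot (hp_bot ▸ hp)
  have := hσ ⟨p - 1, by omega⟩ (isRightDescentPerm_of_apply_eq_bot (by dsimp only; omega) hp)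
  obtain rfl : b = p := Fin.ext (by rw [Fin.ext_iff] at this; dsimp only at this; omega)
  exact hp

theorem val_add_sub_le_of_forall_not_isRightDescentPerm {p q : Fin n} (hpq : p ≤ q)
    (h : ∀ r, p ≤ r → r < q → ¬ IsRightDescentPerm σ r) : (σ p : ℕ) + (q - p) ≤ σ q := by
  rw [Fin.le_def] at hpq
  obtain ⟨d, hd⟩ : ∃ d, (q : ℕ) = p + d := ⟨q - p, by omega⟩
  induction d generalizing q with
  | zero => obtain rfl : q = p := Fin.ext hd; simp
  | succ d ih =>
    let q' : Fin n := ⟨p + d, by omega⟩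
    have hq' : (q' : ℕ) = p + d := rfl
    have hq'q : q' < q := by rw [Fin.lt_def]; omega
    have ih' := ih (q := q') (by omega) (fun r h1 h2 => h r h1 (h2.trans hq'q)) hq'
    have hstep : σ q' < σ q := by
      refine lt_of_le_of_ne (not_lt.mp ?_) (σ.injective.ne hq'q.ne)
      exact (isRightDescentPerm_iff (by omega)).not.mp (h q' (by rw [Fin.le_def]; omega) hq'q)
    rw [Fin.lt_def] at hstep
    omega

theorem FullSupportPerm.apply_bot_ne [NeZero n] (hn : 2 ≤ n) (h : FullSupportPerm σ) :
    σ ⊥ ≠ ⊥ := by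
  intro hfix
  apply h 1 le_rfl (by omega)
  have hsingle : {x : Fin n | (x : ℕ) < 1} = {⊥} := by
    ext x
    simp only [Set.mem_ofPred_eq, Set.mem_singleton_iff, Fin.ext_iff]
    exact Nat.lt_one_iff
  rw [hsingle, Set.image_singleton, hfix]

theorem FullSupportPerm.apply_top_ne [NeZero n] (hn : 2 ≤ n) (h : FullSupportPerm σ) :
    σ ⊤ ≠ ⊤ := by
  intro hfix
  apply h (n - 1) (by omega) le_rfl
  have hcompl : {x : Fin n | (x : ℕ) < n - 1} = {⊤}ᶜ := by
    ext x
    simp only [Set.mem_ofPred_eq, Set.mem_compl_iff, Set.mem_singleton_iff, Fin.ext_iff,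
      Fin.val_top]
    omega
  rw [hcompl, Set.image_compl_eq σ.bijective, Set.image_singleton, hfix]

def IsBlockShift (σ : Equiv.Perm (Fin n)) (i k : ℕ) : Prop :=
  (∀ x : Fin n, (x : ℕ) < i → (σ x : ℕ) = (x : ℕ) + k) ∧
    (∀ x : Fin n, i ≤ (x : ℕ) → (σ x : ℕ) = (x : ℕ) - i)

theorem exists_isBlockShift_of_bigrassmannianPerm (hn : 2 ≤ n) (hσ : BigrassmannianPerm σ)
    (hfs : FullSupportPerm σ) : ∃ i k, 1 ≤ i ∧ 1 ≤ k ∧ i + k = n ∧ IsBlockShift σ i k := by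
  have : NeZero n := ⟨by omega⟩
  obtain ⟨⟨a, ha, ha_uniq⟩, ⟨b, ⟨c, hc, -⟩, hb_uniq⟩⟩ := hσ
  obtain ⟨d, hd, -⟩ := ha
  have h_bot : σ ⊥ = c := (Equiv.Perm.inv_eq_iff_eq.mp <|
    apply_eq_bot_of_forall_isRightDescentPerm_eq hc hb_uniq <| by
      rw [Ne, Equiv.Perm.inv_eq_iff_eq, eq_comm]; exact hfs.apply_bot_ne hn).symm
  have h_top : σ ⊤ = b := (Equiv.Perm.inv_eq_iff_eq.mp <|
    apply_eq_top_of_forall_isRightDescentPerm_eq hb_uniq <| by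
      rw [Ne, Equiv.Perm.inv_eq_iff_eq, eq_comm]; exact hfs.apply_top_ne hn).symm
  have mono : ∀ p q : Fin n, p ≤ q → (q ≤ a ∨ a < p) → (σ p : ℕ) + (q - p) ≤ σ q :=
    fun p q hpq hside => val_add_sub_le_of_forall_not_isRightDescentPerm hpq fun r hpr hrq hr => by
      obtain rfl := ha_uniq r hr
      exact hside.elim hrq.not_ge hpr.not_gt
  have hv_bot : ((⊥ : Fin n) : ℕ) = 0 := rfl
  have hv_top : ((⊤ : Fin n) : ℕ) = n - 1 := Fin.val_top n
  have hσ_bot : (σ ⊥ : ℕ) = b + 1 := by rw [h_bot, hc]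
  have hσ_top : (σ ⊤ : ℕ) = b := by rw [h_top]
  have hσ_a := (σ a).isLt
  have hd_top : a < d := by rw [Fin.lt_def]; omega
  have h_first := mono ⊥ a bot_le (Or.inl le_rfl)
  have h_last := mono d ⊤ le_top (Or.inr hd_top)
  refine ⟨a + 1, b + 1, by omega, by omega, by omega, fun x hx => ?_, fun x hx => ?_⟩
  · have := mono ⊥ x bot_le (Or.inl (by rw [Fin.le_def]; omega))
    have := mono x a (by rw [Fin.le_def]; omega) (Or.inl le_rfl)
    omega
  · have := mono d x (by rw [Fin.le_def]; omega) (Or.inr hd_top)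
    have := mono x ⊤ le_top (Or.inr (by rw [Fin.lt_def]; omega))
    omega

namespace IsBlockShift

variable {i k : ℕ}

theorem inv (h : IsBlockShift σ i k) (hik : i + k = n) : IsBlockShift σ⁻¹ k i := by
  have key : ∀ x : Fin n, ((x : ℕ) < k → ((σ⁻¹ x : Fin n) : ℕ) = x + i) ∧
      (k ≤ (x : ℕ) → ((σ⁻¹ x : Fin n) : ℕ) = x - k) := by
    intro x
    have hx : σ (σ⁻¹ x) = x := σ.apply_symm_apply x
    have := (σ⁻¹ x).isLt
    by_cases hy : ((σ⁻¹ x : Fin n) : ℕ) < i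
    · have := h.1 _ hy
      rw [hx] at this
      omega
    · have := h.2 _ (not_lt.mp hy)
      rw [hx] at this
      omega
  exact ⟨fun x => (key x).1, fun x => (key x).2⟩

theorem existsUnique_isRightDescentPerm (h : IsBlockShift σ i k) (hi : 1 ≤ i) (hk : 1 ≤ k)
    (hik : i + k = n) : ∃! a, IsRightDescentPerm σ a := by
  refine ⟨⟨i - 1, by omega⟩, ⟨⟨i, by omega⟩, by dsimp only; omega, ?_⟩, fun r ⟨s, hs, hlt⟩ => ?_⟩
  · rw [Fin.lt_def, h.2 ⟨i, by omega⟩ le_rfl, h.1 ⟨i - 1, by omega⟩ (by dsimp only; omega)]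
    dsimp only
    omega
  · rw [Fin.lt_def] at hlt
    ext
    show (r : ℕ) = i - 1
    by_contra hne
    rcases lt_or_ge (s : ℕ) i with hs' | hs'
    · rw [h.1 s hs', h.1 r (by omega)] at hlt
      omega
    · rw [h.2 s hs', h.2 r (by omega)] at hlt
      omega

theorem fullSupportPerm (h : IsBlockShift σ i k) (hi : 1 ≤ i) (hk : 1 ≤ k) (hik : i + k = n) :
    FullSupportPerm σ := by
  intro m hm hmn hfix
  -- `m - k` truncates to `0` when `m ≤ k`; either way `σ` moves it out of `[0, m)`.
  let x : Fin n := ⟨m - k, by omega⟩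
  have hx : (x : ℕ) = m - k := rfl
  have hσx : σ x ∈ (⇑σ) '' {y : Fin n | (y : ℕ) < m} := ⟨x, show m - k < m by omega, rfl⟩
  rw [hfix] at hσx
  have : (σ x : ℕ) < m := hσx
  have := h.1 x (by omega)
  omega

theorem bigrassmannianPerm (h : IsBlockShift σ i k) (hi : 1 ≤ i) (hk : 1 ≤ k)
    (hik : i + k = n) : BigrassmannianPerm σ :=
  ⟨h.existsUnique_isRightDescentPerm hi hk hik,
    (h.inv hik).existsUnique_isRightDescentPerm hk hi (by omega)⟩

theorem unique {τ : Equiv.Perm (Fin n)} (hσ : IsBlockShift σ i k) (hτ : IsBlockShift τ i k) :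
    σ = τ := by
  ext x
  by_cases hx : (x : ℕ) < i
  · rw [hσ.1 x hx, hτ.1 x hx]
  · rw [hσ.2 x (not_lt.mp hx), hτ.2 x (not_lt.mp hx)]

end IsBlockShift

theorem isBlockShift_addRight [NeZero n] (c : Fin n) :
    IsBlockShift (Equiv.addRight c) (n - c) c := by
  have := c.isLt
  constructor <;> intro x hx <;> simp only [Equiv.coe_addRight, Fin.val_add_eq_ite] <;>
    split_ifs <;> omega

theorem bigrassmannianPerm_and_fullSupportPerm_iff (hn : 2 ≤ n) :
    BigrassmannianPerm σ ∧ FullSupportPerm σ ↔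
      ∃ i k, 1 ≤ i ∧ 1 ≤ k ∧ i + k = n ∧ IsBlockShift σ i k :=
  ⟨fun h => exists_isBlockShift_of_bigrassmannianPerm hn h.1 h.2,
    fun ⟨_, _, hi, hk, hik, h⟩ => ⟨h.bigrassmannianPerm hi hk hik, h.fullSupportPerm hi hk hik⟩⟩

theorem exists_isBlockShift_iff_exists_addRight [NeZero n] :
    (∃ i k, 1 ≤ i ∧ 1 ≤ k ∧ i + k = n ∧ IsBlockShift σ i k) ↔
      ∃ c : Fin n, c ≠ 0 ∧ Equiv.addRight c = σ := by
  constructor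
  · rintro ⟨i, k, hi, hk, hik, h⟩
    refine ⟨⟨k, by omega⟩, Fin.val_ne_zero_iff.mp (show k ≠ 0 by omega), ?_⟩
    obtain rfl : i = n - k := by omega
    exact (isBlockShift_addRight _).unique h
  · rintro ⟨c, hc, rfl⟩
    have := Fin.val_ne_zero_iff.mpr hc
    exact ⟨n - c, c, by omega, by omega, by omega, isBlockShift_addRight c⟩

theorem card_bigrassmannianPerm_fullSupportPerm (hn : 2 ≤ n) :
    Nat.card {σ : Equiv.Perm (Fin n) // BigrassmannianPerm σ ∧ FullSupportPerm σ} = n - 1 := by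
  have : NeZero n := ⟨by omega⟩
  have hinj : Function.Injective fun c : {c : Fin n // c ≠ 0} => Equiv.addRight (c : Fin n) :=
    fun c c' h => Subtype.ext (by simpa using congrArg (· 0) h)
  calc Nat.card {σ : Equiv.Perm (Fin n) // BigrassmannianPerm σ ∧ FullSupportPerm σ}
      = Nat.card (Set.range fun c : {c : Fin n // c ≠ 0} => Equiv.addRight (c : Fin n)) :=
        Nat.card_congr <| Equiv.subtypeEquivRight fun σ => by
          rw [bigrassmannianPerm_and_fullSupportPerm_iff hn,
            exists_isBlockShift_iff_exists_addRight]
          simp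
    _ = Nat.card {c : Fin n // c ≠ 0} := Nat.card_range_of_injective hinj
    _ = n - 1 := by simp

end

/-- Classification of bigrassmannian permutations of full support in `S_n` (`n ≥ 2`):
they are exactly the "block-shift" permutations determined by `i + k = n` (`i, k ≥ 1`),
and there are exactly `n - 1` of them. -/
theorem bigrassmannian_full_support_perm_classification (n : ℕ) (hn : 2 ≤ n) :
    (∀ σ : Equiv.Perm (Fin n),
      (BigrassmannianPerm σ ∧ FullSupportPerm σ) ↔
        ∃ i k : ℕ, 1 ≤ i ∧ 1 ≤ k ∧ i + k = n ∧
          (∀ x : Fin n, (x : ℕ) < i → (σ x : ℕ) = (x : ℕ) + k) ∧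
          (∀ x : Fin n, i ≤ (x : ℕ) → (σ x : ℕ) = (x : ℕ) - i)) ∧
    Nat.card {σ : Equiv.Perm (Fin n) // BigrassmannianPerm σ ∧ FullSupportPerm σ} = n - 1 :=
  ⟨fun _ => bigrassmannianPerm_and_fullSupportPerm_iff hn,
    card_bigrassmannianPerm_fullSupportPerm hn⟩

end NilpotencyIndices
end

section
/- For every n ≥ 5, there is no bigrassmannian permutation σ ∈ S_n of full support satisfying the orthogonality condition, where the orthogonality condition for a bigrassmannian σ with unique left descent r and unique right descent s states: (a) for every a ∈ {1, …, n−1} with |a − s| ≥ 2 and σ(a+1) = σ(a) + 1, one has |σ(a) − r| ≥ 2; and (b) for every a ∈ {1, …, n−1} with |a − r| ≥ 2 and σ⁻¹(a+1) = σ⁻¹(a) + 1, one has |σ⁻¹(a) − s| ≥ 2. (This is the statement BiGr⊥°(A_m) = ∅ for m > 3, with m = n − 1.) -/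
/-!
Let `τ` have unique right descent `d`, unique left descent `l` and full support. Then `τ` increases
on `[0, d]` and on `[d + 1, n - 1]`, so the maximal value `n - 1` sits at position `d`; dually, the
value `τ 0 - 1` lies to the right of position `0`, so `τ 0 = l + 1`. Counting the increasing runs
of `τ` and of `τ⁻¹` gives `l + d + 2 = n`, and when `d ≥ 2` this forces `τ 1 = l + 2`: the adjacent
positions `0, 1` carry consecutive values next to the left descent, violating condition (a).
For `n ≥ 5` we get `l + d ≥ 3`, so one of the two descents is at least `2`; the other case is the first
one for `σ⁻¹`, for which condition (b) becomes condition (a).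
-/


namespace NilpotencyIndices


section Permutations

variable {n : ℕ}

/-- Condition (a) of orthogonality; condition (b) for `σ` is this condition for `σ⁻¹`, with the
roles of the two descents exchanged. -/
def OrthogonalityCondition (σ : Equiv.Perm (Fin n)) (r s : Fin n) : Prop :=
  ∀ a b : Fin n, (b : ℕ) = (a : ℕ) + 1 → 2 ≤ Nat.dist (a : ℕ) (s : ℕ) →
    (σ b : ℕ) = (σ a : ℕ) + 1 → 2 ≤ Nat.dist (σ a : ℕ) (r : ℕ)

theorem isLeftDescentPerm_inv {σ : Equiv.Perm (Fin n)} {a : Fin n} :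
    IsLeftDescentPerm σ⁻¹ a ↔ IsRightDescentPerm σ a := by
  rw [IsLeftDescentPerm, inv_inv]

theorem FullSupportPerm.inv {σ : Equiv.Perm (Fin n)} (h : FullSupportPerm σ) :
    FullSupportPerm σ⁻¹ := by
  intro m hm1 hm2 heq
  apply h m hm1 hm2
  conv_lhs => rw [← heq]
  rw [← Set.image_comp]
  simp [Equiv.Perm.coe_inv]

theorem FullSupportPerm.exists_lt_le_apply {σ : Equiv.Perm (Fin n)} (h : FullSupportPerm σ)
    {m : ℕ} (hm1 : 1 ≤ m) (hm2 : m ≤ n - 1) : ∃ x : Fin n, (x : ℕ) < m ∧ m ≤ (σ x : ℕ) := by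
  by_contra! hmaps
  have hbij : Set.BijOn σ {x : Fin n | (x : ℕ) < m} {x : Fin n | (x : ℕ) < m} :=
    ((Set.toFinite _).injOn_iff_bijOn_of_mapsTo hmaps).mp σ.injective.injOn
  exact h m hm1 hm2 hbij.image_eq

section Descents

variable {π : Equiv.Perm (Fin n)}

theorem val_apply_lt_of_not_isRightDescentPerm {a b : Fin n} (hb : (b : ℕ) = a + 1)
    (ha : ¬ IsRightDescentPerm π a) : (π a : ℕ) < π b := by
  have hne : π a ≠ π b := π.injective.ne (Fin.ne_of_val_ne (by omega))
  exact Fin.lt_def.mp (lt_of_le_of_ne (not_lt.mp fun hlt => ha ⟨b, hb, hlt⟩) hne)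

theorem val_apply_add_le {p q : Fin n} (hpq : p ≤ q)
    (h : ∀ a : Fin n, p ≤ a → a < q → ¬ IsRightDescentPerm π a) :
    (π p : ℕ) + (q - p) ≤ π q := by
  obtain ⟨k, hk⟩ : ∃ k, (q : ℕ) = p + k := ⟨q - p, by omega⟩
  induction k generalizing q with
  | zero => simp [Fin.ext (show q.val = p.val by omega)]
  | succ k ih =>
    have hlt : (p : ℕ) + k < n := by omega
    let q' : Fin n := ⟨p + k, hlt⟩
    have hq' : q' < q := Fin.lt_def.mpr (by simp [q']; omega)
    have hle := ih (q := q') (Fin.le_def.mpr (by simp [q']))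
      (fun a hpa haq => h a hpa (haq.trans hq')) rfl
    have hstep := val_apply_lt_of_not_isRightDescentPerm (b := q) (a := q') (by simp [q']; omega)
      (h q' (Fin.le_def.mpr (by simp [q'])) hq')
    simp only [q'] at hle hstep
    omega

theorem isRightDescentPerm_of_val_apply_eq_zero {a b : Fin n} (hb : (b : ℕ) = a + 1)
    (h0 : (π b : ℕ) = 0) : IsRightDescentPerm π a := by
  have hne : π b ≠ π a := π.injective.ne (Fin.ne_of_val_ne (by omega))
  refine ⟨b, hb, lt_of_le_of_ne (Fin.le_def.mpr ?_) hne⟩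
  omega

theorem isRightDescentPerm_of_val_apply_add_one_eq {a b : Fin n} (hb : (b : ℕ) = a + 1)
    (hlast : (π a : ℕ) + 1 = n) : IsRightDescentPerm π a := by
  have hne : π b ≠ π a := π.injective.ne (Fin.ne_of_val_ne (by omega))
  refine ⟨b, hb, lt_of_le_of_ne (Fin.le_def.mpr ?_) hne⟩
  have := (π b).isLt
  omega

end Descents

section Bigrassmannian

variable {τ : Equiv.Perm (Fin n)} {l d : Fin n}

theorem FullSupportPerm.val_apply_rightDescent (hfs : FullSupportPerm τ) (hn : 2 ≤ n)
    (hd : ∀ a, IsRightDescentPerm τ a → a = d) :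
    (τ d : ℕ) + 1 = n := by
  obtain ⟨x, hx, hτx⟩ := hfs.exists_lt_le_apply (m := n - 1) (by omega) le_rfl
  have hτx' : (τ x : ℕ) + 1 = n := by have := (τ x).isLt; omega
  rw [← hd x (isRightDescentPerm_of_val_apply_add_one_eq (b := ⟨x + 1, by omega⟩) rfl hτx')]
  exact hτx'

theorem FullSupportPerm.val_apply_zero (hfs : FullSupportPerm τ) (hn : 2 ≤ n)
    (hl : ∀ a, IsLeftDescentPerm τ a → a = l) {p : Fin n} (hp : (p : ℕ) = 0) :
    (τ p : ℕ) = l + 1 := by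
  obtain ⟨x, hx, hτx⟩ := hfs.exists_lt_le_apply (m := 1) le_rfl (by omega)
  obtain rfl : x = p := Fin.ext (by omega)
  have hdesc : IsLeftDescentPerm τ ⟨τ x - 1, by omega⟩ :=
    isRightDescentPerm_of_val_apply_eq_zero (b := τ x) (by simp; omega) (by simp [hp])
  have := congrArg Fin.val (hl _ hdesc)
  simp only at this
  omega

theorem FullSupportPerm.leftDescent_add_rightDescent (hfs : FullSupportPerm τ) (hn : 2 ≤ n)
    (hd : ∀ a, IsRightDescentPerm τ a → a = d) (hl : ∀ a, IsLeftDescentPerm τ a → a = l) :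
    (l : ℕ) + d + 2 = n := by
  obtain ⟨p₀, hp₀0⟩ : ∃ p : Fin n, (p : ℕ) = 0 := ⟨⟨0, by omega⟩, rfl⟩
  have hp₀ : (τ p₀ : ℕ) = l + 1 := hfs.val_apply_zero hn hl hp₀0
  have hd' : (τ d : ℕ) + 1 = n := hfs.val_apply_rightDescent hn hd
  have hle : (τ p₀ : ℕ) + (d - p₀) ≤ τ d :=
    val_apply_add_le (Fin.le_def.mpr (by omega)) fun a _ had hdesc => had.ne (hd a hdesc)
  have hge : (τ⁻¹ (τ p₀) : ℕ) + (τ d - τ p₀) ≤ τ⁻¹ (τ d) := by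
    refine val_apply_add_le (Fin.le_def.mpr (by omega)) fun a ha _ hdesc => ?_
    have := congrArg Fin.val (hl a hdesc)
    rw [Fin.le_def] at ha
    omega
  simp only [Equiv.Perm.coe_inv, Equiv.symm_apply_apply] at hge
  omega

theorem FullSupportPerm.not_orthogonalityCondition (hfs : FullSupportPerm τ)
    (hd : ∀ a, IsRightDescentPerm τ a → a = d) (hl : ∀ a, IsLeftDescentPerm τ a → a = l)
    (hd2 : 2 ≤ (d : ℕ)) : ¬ OrthogonalityCondition τ l d := by
  intro horth
  have hn : 2 ≤ n := by have := d.isLt; omega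
  obtain ⟨p₀, hp₀⟩ : ∃ p : Fin n, (p : ℕ) = 0 := ⟨⟨0, by omega⟩, rfl⟩
  obtain ⟨p₁, hp₁⟩ : ∃ p : Fin n, (p : ℕ) = 1 := ⟨⟨1, by omega⟩, rfl⟩
  have hτp₀ : (τ p₀ : ℕ) = l + 1 := hfs.val_apply_zero hn hl hp₀
  have hτd : (τ d : ℕ) + 1 = n := hfs.val_apply_rightDescent hn hd
  have hsum : (l : ℕ) + d + 2 = n := hfs.leftDescent_add_rightDescent hn hd hl
  have hlt : (τ p₀ : ℕ) < τ p₁ := val_apply_lt_of_not_isRightDescentPerm (by omega)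
    fun hdesc => by have := congrArg Fin.val (hd _ hdesc); omega
  have hle : (τ p₁ : ℕ) + (d - p₁) ≤ τ d :=
    val_apply_add_le (Fin.le_def.mpr (by omega)) fun a _ had hdesc => had.ne (hd a hdesc)
  have := horth p₀ p₁ (by omega) (by unfold Nat.dist; omega) (by omega)
  unfold Nat.dist at this
  omega

end Bigrassmannian

end Permutations

/-- For `n ≥ 5` there is no bigrassmannian permutation of full support in `S_n`
satisfying the orthogonality condition (`BiGr⊥°(A_m) = ∅` for `m > 3`). -/
theorem no_orthogonal_bigrassmannian_full_support_perm (n : ℕ) (hn : 5 ≤ n) :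
    ¬ ∃ (σ : Equiv.Perm (Fin n)) (r s : Fin n),
        (IsLeftDescentPerm σ r ∧ ∀ a : Fin n, IsLeftDescentPerm σ a → a = r) ∧
        (IsRightDescentPerm σ s ∧ ∀ a : Fin n, IsRightDescentPerm σ a → a = s) ∧
        FullSupportPerm σ ∧
        (∀ a b : Fin n, (b : ℕ) = (a : ℕ) + 1 → 2 ≤ Nat.dist (a : ℕ) (s : ℕ) →
          (σ b : ℕ) = (σ a : ℕ) + 1 → 2 ≤ Nat.dist ((σ a : ℕ)) ((r : ℕ))) ∧
        (∀ a b : Fin n, (b : ℕ) = (a : ℕ) + 1 → 2 ≤ Nat.dist (a : ℕ) (r : ℕ) →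
          (σ⁻¹ b : ℕ) = (σ⁻¹ a : ℕ) + 1 → 2 ≤ Nat.dist ((σ⁻¹ a : ℕ)) ((s : ℕ))) := by
  rintro ⟨σ, r, s, ⟨-, hr⟩, ⟨-, hs⟩, hfs, horth, horth_inv⟩
  have hsum : (r : ℕ) + s + 2 = n := hfs.leftDescent_add_rightDescent (by omega) hs hr
  rcases le_or_gt 2 (s : ℕ) with hs2 | hs2
  · exact hfs.not_orthogonalityCondition hs hr hs2 horth
  · exact hfs.inv.not_orthogonalityCondition hr (fun a ha => hs a (isLeftDescentPerm_inv.mp ha))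
      (by omega) horth_inv

end NilpotencyIndices
end
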